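/- arXiv:1604.07892 — 4 statements merged into one kernel-verified Lean document; each statement's English description precedes it below -/
import Mathlib

section
/- With $P_k(z)=\prod_{i=1}^{n_k}(z-p_{k,i})$, $P(z)=\prod_{k=1}^N P_k(z)$, and $Q(z)=\sum_{k=1}^N\big(\frac{zP_k''P}{n_k^2 P_k}-\frac{zP_k'P_{k+1}'P}{n_k n_{k+1}P_k P_{k+1}}+\frac{P_k'P}{n_k^2 P_k}\big)$ (a polynomial of degree less than $m=\sum_k n_k$), the configuration $\{p_{k,i}\}$ is balanced (all forces $F_{k,i}=0$) if and only if $Q\equiv 0$. -/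
open Finset Polynomial

/-- The force exerted on `p k i` in a doubly periodic configuration. -/
noncomputable def Force (N : ℕ) (n : ZMod N → ℕ) (p : (k : ZMod N) → Fin (n k) → ℂ)
    (k : ZMod N) (i : Fin (n k)) : ℂ :=
  (∑ j ∈ Finset.univ \ {i}, (p k i + p k j) / ((n k : ℂ) ^ 2 * (p k i - p k j)))
    - ∑ j, (p k i + p (k + 1) j) /
        (2 * (n k : ℂ) * (n (k + 1) : ℂ) * (p k i - p (k + 1) j))
    - ∑ j, (p k i + p (k - 1) j) /
        (2 * (n k : ℂ) * (n (k - 1) : ℂ) * (p k i - p (k - 1) j))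

/-- The level polynomial `P k = ∏ i, (z - p k i)`. -/
noncomputable def levelPoly (N : ℕ) (n : ZMod N → ℕ) (p : (k : ZMod N) → Fin (n k) → ℂ)
    (k : ZMod N) : Polynomial ℂ :=
  ∏ i, (X - C (p k i))

/-- The polynomial `Q`, where `P/P_k` is realized as `∏_{l ≠ k} P_l` and
`P/(P_k P_{k+1})` as `∏_{l ∉ {k, k+1}} P_l`. -/
noncomputable def Qpoly (N : ℕ) [NeZero N] (n : ZMod N → ℕ)
    (p : (k : ZMod N) → Fin (n k) → ℂ) : Polynomial ℂ :=
  ∑ k : ZMod N,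
    (C (((n k : ℂ) ^ 2)⁻¹) * X * derivative (derivative (levelPoly N n p k)) *
        ∏ l ∈ Finset.univ \ {k}, levelPoly N n p l
      - C (((n k : ℂ) * (n (k + 1) : ℂ))⁻¹) * X * derivative (levelPoly N n p k) *
        derivative (levelPoly N n p (k + 1)) *
        ∏ l ∈ Finset.univ \ {k, k + 1}, levelPoly N n p l
      + C (((n k : ℂ) ^ 2)⁻¹) * derivative (levelPoly N n p k) *
        ∏ l ∈ Finset.univ \ {k}, levelPoly N n p l)


theorem myderivative_prod {ι : Type*} [DecidableEq ι] {R : Type*} [CommSemiring R]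
    (s : Finset ι) (f : ι → R[X]) :
    derivative (∏ i ∈ s, f i) = ∑ i ∈ s, (∏ j ∈ s.erase i, f j) * derivative (f i) := by
  classical
  induction s using Finset.induction_on with
  | empty => simp
  | insert _ _ hx ih =>
    rename_i a s
    rw [Finset.prod_insert hx, derivative_mul, ih, Finset.sum_insert hx, Finset.erase_insert hx,
      Finset.mul_sum]
    congr 1
    · ring
    · refine Finset.sum_congr rfl fun b hb => ?_
      rw [Finset.erase_insert_of_ne (by rintro rfl; exact hx hb), Finset.prod_insert
        (fun h => hx (Finset.mem_of_mem_erase h))]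
      ring


section helpers
variable (N : ℕ) (n : ZMod N → ℕ) (p : (k : ZMod N) → Fin (n k) → ℂ) (x : ℂ) (l : ZMod N)

theorem eval_levelPoly : eval x (levelPoly N n p l) = ∏ j, (x - p l j) := by
  simp [levelPoly, eval_prod]

theorem deriv_levelPoly : derivative (levelPoly N n p l)
    = ∑ j, ∏ j' ∈ Finset.univ.erase j, (X - C (p l j')) := by
  rw [levelPoly, myderivative_prod]
  simp

theorem eval_deriv_levelPoly : eval x (derivative (levelPoly N n p l))
    = ∑ j, ∏ j' ∈ Finset.univ.erase j, (x - p l j') := by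
  rw [deriv_levelPoly]
  simp [eval_finset_sum, eval_prod]

theorem eval_deriv2_levelPoly : eval x (derivative (derivative (levelPoly N n p l)))
    = ∑ j, ∑ j' ∈ Finset.univ.erase j, ∏ j'' ∈ (Finset.univ.erase j).erase j',
        (x - p l j'') := by
  rw [deriv_levelPoly, map_sum]
  simp only [myderivative_prod]
  simp [eval_finset_sum, eval_prod]

end helpers

section self
variable (N : ℕ) (n : ZMod N → ℕ) (p : (k : ZMod N) → Fin (n k) → ℂ)
  (k : ZMod N) (i : Fin (n k))

theorem eval_levelPoly_self : eval (p k i) (levelPoly N n p k) = 0 := by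
  rw [eval_levelPoly]
  exact Finset.prod_eq_zero (Finset.mem_univ i) (sub_self _)

theorem eval_deriv_self : eval (p k i) (derivative (levelPoly N n p k))
    = ∏ j ∈ Finset.univ.erase i, (p k i - p k j) := by
  rw [eval_deriv_levelPoly]
  rw [Finset.sum_eq_single i]
  · intro j _ hj
    exact Finset.prod_eq_zero (Finset.mem_erase.2 ⟨Ne.symm hj, Finset.mem_univ i⟩) (sub_self _)
  · simp

theorem eval_deriv2_self : eval (p k i) (derivative (derivative (levelPoly N n p k)))
    = 2 * ∑ j ∈ Finset.univ.erase i, ∏ j' ∈ (Finset.univ.erase i).erase j,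
        (p k i - p k j') := by
  rw [eval_deriv2_levelPoly]
  rw [← Finset.add_sum_erase _ _ (Finset.mem_univ i), two_mul]
  congr 1
  refine Finset.sum_congr rfl fun j hj => ?_
  rw [Finset.sum_eq_single i]
  · rw [Finset.erase_right_comm]
  · intro j' hj' hj'i
    refine Finset.prod_eq_zero ?_ (sub_self _)
    simp only [Finset.mem_erase] at hj hj' ⊢
    exact ⟨Ne.symm hj'i, Ne.symm hj.1, Finset.mem_univ i⟩
  · intro h
    exact absurd (Finset.mem_erase.2 ⟨Ne.symm (Finset.mem_erase.1 hj).1, Finset.mem_univ i⟩) h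

end self


theorem claimS {α : Type*} [DecidableEq α] (s : Finset α) (x c : ℂ) (q : α → ℂ)
    (hc : c ≠ 0) (hq : ∀ j ∈ s, x - q j ≠ 0) :
    (∏ j ∈ s, (x - q j)) * (∑ j ∈ s, (x + q j) / (c * (x - q j)))
      = (2 * x * (∑ j ∈ s, ∏ j' ∈ s.erase j, (x - q j'))
          - (s.card : ℂ) * ∏ j ∈ s, (x - q j)) / c := by
  rw [Finset.mul_sum]
  have step : ∀ j ∈ s, (∏ j' ∈ s, (x - q j')) * ((x + q j) / (c * (x - q j)))
      = (2 * x * ∏ j' ∈ s.erase j, (x - q j') - ∏ j' ∈ s, (x - q j')) / c := by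
    intro j hj
    rw [← Finset.mul_prod_erase _ (fun j' => x - q j') hj]
    field_simp [hq j hj]
    ring
  rw [Finset.sum_congr rfl step, ← Finset.sum_div, Finset.sum_sub_distrib,
    ← Finset.mul_sum, Finset.sum_const, nsmul_eq_mul]

set_option maxHeartbeats 3200000 in
theorem eval_Qpoly (N : ℕ) [NeZero N] (hN2 : 2 ≤ N) (n : ZMod N → ℕ) (hn : ∀ k, 0 < n k)
    (p : (k : ZMod N) → Fin (n k) → ℂ)
    (hdist : Function.Injective (fun x : Σ k : ZMod N, Fin (n k) => p x.1 x.2))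
    (k : ZMod N) (i : Fin (n k)) :
    eval (p k i) (Qpoly N n p) =
      (∏ j ∈ Finset.univ.erase i, (p k i - p k j)) *
      (∏ l ∈ Finset.univ.erase k, ∏ j, (p k i - p l j)) * Force N n p k i := by
  have : Fact (1 < N) := ⟨hN2⟩
  have h1 : (1 : ZMod N) ≠ 0 := by
    intro h
    have := congrArg ZMod.val h
    rw [ZMod.val_one, ZMod.val_zero] at this
    exact one_ne_zero this
  have hk1 : k + 1 ≠ k := fun h => h1 (by rwa [add_eq_left] at h)
  have hkm1 : k - 1 ≠ k := fun h => h1 (by rwa [sub_eq_self] at h)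
  have hmk1 : k - 1 + 1 = k := by ring
  have hnk : (n k : ℂ) ≠ 0 := Nat.cast_ne_zero.2 (hn k).ne'
  have hnk1 : (n (k + 1) : ℂ) ≠ 0 := Nat.cast_ne_zero.2 (hn _).ne'
  have hnkm : (n (k - 1) : ℂ) ≠ 0 := Nat.cast_ne_zero.2 (hn _).ne'
  have hd : ∀ (l : ZMod N) (j : Fin (n l)), (⟨l, j⟩ : Σ k, Fin (n k)) ≠ ⟨k, i⟩ →
      p k i - p l j ≠ 0 := by
    intro l j h
    exact sub_ne_zero.2 fun he => h (hdist he.symm)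
  have hdk : ∀ j ∈ Finset.univ.erase i, p k i - p k j ≠ 0 := by
    intro j hj
    exact hd k j (by simpa using (Finset.mem_erase.1 hj).1)
  have hd1 : ∀ (j : Fin (n (k + 1))), p k i - p (k + 1) j ≠ 0 := fun j =>
    hd _ j (fun h => hk1 (congrArg Sigma.fst h))
  have hdm : ∀ (j : Fin (n (k - 1))), p k i - p (k - 1) j ≠ 0 := fun j =>
    hd _ j (fun h => hkm1 (congrArg Sigma.fst h))
  set x := p k i with hxdef
  set D := ∏ j ∈ Finset.univ.erase i, (x - p k j) with hDdef
  set R := ∏ l ∈ Finset.univ.erase k, ∏ j, (x - p l j) with hRdef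
  set T := ∑ j ∈ Finset.univ.erase i, ∏ j' ∈ (Finset.univ.erase i).erase j, (x - p k j')
    with hTdef
  set S1 := ∑ j, ∏ j' ∈ Finset.univ.erase j, (x - p (k + 1) j') with hS1def
  set Sm := ∑ j, ∏ j' ∈ Finset.univ.erase j, (x - p (k - 1) j') with hSmdef
  set P1 := ∏ j, (x - p (k + 1) j) with hP1def
  set Pm := ∏ j, (x - p (k - 1) j) with hPmdef
  have hP1ne : P1 ≠ 0 := Finset.prod_ne_zero_iff.2 fun j _ => hd1 j
  have hPmne : Pm ≠ 0 := Finset.prod_ne_zero_iff.2 fun j _ => hdm j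
  have hDne : D ≠ 0 := Finset.prod_ne_zero_iff.2 hdk
  have hsd : (Finset.univ : Finset (ZMod N)) \ {k} = Finset.univ.erase k := by
    ext l; simp
  have hsd2 : (Finset.univ : Finset (ZMod N)) \ {k, k + 1}
      = (Finset.univ.erase k).erase (k + 1) := by
    ext l; simp; tauto
  have hsd3 : (Finset.univ : Finset (ZMod N)) \ {k - 1, k}
      = (Finset.univ.erase (k - 1)).erase k := by
    ext l; simp; tauto
  have hRest1 : ∏ l ∈ (Finset.univ.erase k).erase (k + 1), ∏ j, (x - p l j)
      = R / P1 := by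
    rw [eq_div_iff hP1ne, mul_comm]
    exact Finset.mul_prod_erase _ (fun l => ∏ j, (x - p l j))
      (Finset.mem_erase.2 ⟨hk1, Finset.mem_univ _⟩)
  have hRestm : ∏ l ∈ (Finset.univ.erase (k - 1)).erase k, ∏ j, (x - p l j)
      = R / Pm := by
    rw [Finset.erase_right_comm, eq_div_iff hPmne, mul_comm]
    exact Finset.mul_prod_erase _ (fun l => ∏ j, (x - p l j))
      (Finset.mem_erase.2 ⟨hkm1, Finset.mem_univ _⟩)
  have hPk' : eval x (derivative (levelPoly N n p k)) = D := eval_deriv_self N n p k i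
  have hPk'' : eval x (derivative (derivative (levelPoly N n p k))) = 2 * T :=
    eval_deriv2_self N n p k i
  have hP1' : eval x (derivative (levelPoly N n p (k + 1))) = S1 :=
    eval_deriv_levelPoly N n p x (k + 1)
  have hPm' : eval x (derivative (levelPoly N n p (k - 1))) = Sm :=
    eval_deriv_levelPoly N n p x (k - 1)
  have hPkz : eval x (levelPoly N n p k) = 0 := eval_levelPoly_self N n p k i
  have hRprod : eval x (∏ l ∈ Finset.univ \ {k}, levelPoly N n p l) = R := by
    rw [eval_prod, hsd]
    exact Finset.prod_congr rfl fun l _ => eval_levelPoly N n p x l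
  have hRest1e : eval x (∏ l ∈ Finset.univ \ {k, k + 1}, levelPoly N n p l)
      = R / P1 := by
    rw [eval_prod, hsd2, ← hRest1]
    exact Finset.prod_congr rfl fun l _ => eval_levelPoly N n p x l
  have hRestme : eval x (∏ l ∈ Finset.univ \ {k - 1, k}, levelPoly N n p l)
      = R / Pm := by
    rw [eval_prod, hsd3, ← hRestm]
    exact Finset.prod_congr rfl fun l _ => eval_levelPoly N n p x l
  have hzm : eval x (∏ l ∈ Finset.univ \ {k - 1}, levelPoly N n p l) = 0 := by
    rw [eval_prod]
    exact Finset.prod_eq_zero (by simp [Ne.symm hkm1]) hPkz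
  -- claims about the force sums
  have hC1 : D * (∑ j ∈ Finset.univ.erase i, (x + p k j) / ((n k : ℂ) ^ 2 * (x - p k j)))
      = (2 * x * T - ((n k : ℂ) - 1) * D) / (n k : ℂ) ^ 2 := by
    have h := claimS (Finset.univ.erase i) x ((n k : ℂ) ^ 2) (p k)
      (pow_ne_zero 2 hnk) hdk
    rw [Finset.card_erase_of_mem (Finset.mem_univ i), Finset.card_univ, Fintype.card_fin,
      Nat.cast_sub (hn k), Nat.cast_one] at h
    rw [hDdef, hTdef]
    exact h
  have hC2 : P1 * (∑ j, (x + p (k + 1) j) /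
        (2 * (n k : ℂ) * (n (k + 1) : ℂ) * (x - p (k + 1) j)))
      = (2 * x * S1 - (n (k + 1) : ℂ) * P1) / (2 * (n k : ℂ) * (n (k + 1) : ℂ)) := by
    have h := claimS Finset.univ x (2 * (n k : ℂ) * (n (k + 1) : ℂ)) (p (k + 1))
      (by simp [hnk, hnk1]) (fun j _ => hd1 j)
    rw [Finset.card_univ, Fintype.card_fin] at h
    rw [hP1def, hS1def]
    exact h
  have hC3 : Pm * (∑ j, (x + p (k - 1) j) /
        (2 * (n k : ℂ) * (n (k - 1) : ℂ) * (x - p (k - 1) j)))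
      = (2 * x * Sm - ((n (k - 1)) : ℂ) * Pm) / (2 * (n k : ℂ) * (n (k - 1) : ℂ)) := by
    have h := claimS Finset.univ x (2 * (n k : ℂ) * (n (k - 1) : ℂ)) (p (k - 1))
      (by simp [hnk, hnkm]) (fun j _ => hdm j)
    rw [Finset.card_univ, Fintype.card_fin] at h
    rw [hPmdef, hSmdef]
    exact h
  clear_value x D R T S1 Sm P1 Pm
  have hLHS : eval x (Qpoly N n p) =
      x * (2 * T) * R / (n k : ℂ) ^ 2
        - x * D * S1 * (R / P1) / ((n k : ℂ) * (n (k + 1) : ℂ))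
        + D * R / (n k : ℂ) ^ 2
        + (x * eval x (derivative (derivative (levelPoly N n p (k - 1)))) * 0
              / (n (k - 1) : ℂ) ^ 2
            - x * Sm * D * (R / Pm) / ((n (k - 1) : ℂ) * (n k : ℂ))
            + Sm * 0 / (n (k - 1) : ℂ) ^ 2) := by
    rw [Qpoly, eval_finset_sum]
    rw [← Finset.sum_subset (Finset.subset_univ {k, k - 1}) ?van]
    case van =>
      intro k' _ hk'
      simp only [Finset.mem_insert, Finset.mem_singleton, not_or] at hk'
      have hA : eval x (∏ l ∈ Finset.univ \ {k'}, levelPoly N n p l) = 0 := by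
        rw [eval_prod]
        exact Finset.prod_eq_zero (by simp [Ne.symm hk'.1]) hPkz
      have hB : eval x (∏ l ∈ Finset.univ \ {k', k' + 1}, levelPoly N n p l) = 0 := by
        rw [eval_prod]
        refine Finset.prod_eq_zero ?_ hPkz
        simp only [Finset.mem_sdiff, Finset.mem_univ, true_and, Finset.mem_insert,
          Finset.mem_singleton, not_or]
        exact ⟨Ne.symm hk'.1, fun h => hk'.2 (eq_sub_of_add_eq h.symm).symm.symm⟩
      simp [hA, hB]
    rw [Finset.sum_pair (Ne.symm hkm1)]
    simp only [hmk1, eval_add, eval_sub, eval_mul, eval_C, eval_X, hPk', hPk'', hP1', hPm',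
      hRprod, hRest1e, hRestme, hzm]
    ring
  rw [hLHS]
  simp only [Force]
  rw [show (Finset.univ : Finset (Fin (n k))) \ {i} = Finset.univ.erase i by ext j; simp]
  rw [← hxdef]
  have hF1 : (∑ j ∈ Finset.univ.erase i, (x + p k j) / ((n k : ℂ) ^ 2 * (x - p k j)))
      = (2 * x * T - ((n k : ℂ) - 1) * D) / (n k : ℂ) ^ 2 / D := by
    rw [eq_div_iff hDne, ← hC1]
    ring
  have hF2 : (∑ j, (x + p (k + 1) j) /
        (2 * (n k : ℂ) * (n (k + 1) : ℂ) * (x - p (k + 1) j)))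
      = (2 * x * S1 - (n (k + 1) : ℂ) * P1) / (2 * (n k : ℂ) * (n (k + 1) : ℂ)) / P1 := by
    rw [eq_div_iff hP1ne, ← hC2]
    ring
  have hF3 : (∑ j, (x + p (k - 1) j) /
        (2 * (n k : ℂ) * (n (k - 1) : ℂ) * (x - p (k - 1) j)))
      = (2 * x * Sm - ((n (k - 1)) : ℂ) * Pm) / (2 * (n k : ℂ) * (n (k - 1) : ℂ)) / Pm := by
    rw [eq_div_iff hPmne, ← hC3]
    ring
  rw [hF1, hF2, hF3]
  set a := (n k : ℂ) with hadef
  set b := (n (k + 1) : ℂ) with hbdef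
  set c := (n (k - 1) : ℂ) with hcdef
  clear_value a b c
  have e1 : D * R * ((2 * x * T - (a - 1) * D) / a ^ 2 / D)
      = R * (2 * x * T) / a ^ 2 - (a - 1) * D * R / a ^ 2 := by
    field_simp
  have e2 : D * R * ((2 * x * S1 - b * P1) / (2 * a * b) / P1)
      = x * S1 * D * (R / P1) / (a * b) - D * R / (2 * a) := by
    field_simp
  have e3 : D * R * ((2 * x * Sm - c * Pm) / (2 * a * c) / Pm)
      = x * Sm * D * (R / Pm) / (c * a) - D * R / (2 * a) := by
    field_simp
  have e4 : D * R / a ^ 2 + (a - 1) * D * R / a ^ 2 = D * R / a := by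
    field_simp; ring
  have e5 : D * R / (2 * a) + D * R / (2 * a) = D * R / a := by
    field_simp; ring
  linear_combination (-1 : ℂ) * e1 + e2 + e3 + e4 - e5

theorem levelPoly_monic (N : ℕ) (n : ZMod N → ℕ) (p : (k : ZMod N) → Fin (n k) → ℂ)
    (l : ZMod N) : (levelPoly N n p l).Monic :=
  monic_prod_of_monic _ _ fun i _ => monic_X_sub_C _

theorem natDegree_levelPoly (N : ℕ) (n : ZMod N → ℕ) (p : (k : ZMod N) → Fin (n k) → ℂ)
    (l : ZMod N) : (levelPoly N n p l).natDegree = n l := by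
  rw [levelPoly, natDegree_prod_of_monic _ _ (fun i _ => monic_X_sub_C _)]
  simp

theorem natDegree_prod_levelPoly (N : ℕ) (n : ZMod N → ℕ)
    (p : (k : ZMod N) → Fin (n k) → ℂ) (s : Finset (ZMod N)) :
    (∏ l ∈ s, levelPoly N n p l).natDegree = ∑ l ∈ s, n l := by
  rw [natDegree_prod_of_monic _ (levelPoly N n p) (fun l _ => levelPoly_monic N n p l)]
  exact Finset.sum_congr rfl fun l _ => natDegree_levelPoly N n p l

theorem natDegree_Qpoly_le (N : ℕ) [NeZero N] (hN2 : 2 ≤ N) (n : ZMod N → ℕ)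
    (hn : ∀ k, 0 < n k) (p : (k : ZMod N) → Fin (n k) → ℂ) :
    (Qpoly N n p).natDegree ≤ (∑ k, n k) - 1 := by
  have : Fact (1 < N) := ⟨hN2⟩
  have h1 : (1 : ZMod N) ≠ 0 := by
    intro h
    have := congrArg ZMod.val h
    rw [ZMod.val_one, ZMod.val_zero] at this
    exact one_ne_zero this
  rw [Qpoly]
  refine natDegree_sum_le_of_forall_le _ _ fun k _ => ?_
  have hk1 : k + 1 ≠ k := fun h => h1 (by rwa [add_eq_left] at h)
  have hsplit : ∑ l, n l = n k + ∑ l ∈ Finset.univ.erase k, n l :=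
    (Finset.add_sum_erase _ _ (Finset.mem_univ k)).symm
  have hsplit2 : ∑ l ∈ Finset.univ.erase k, n l
      = n (k + 1) + ∑ l ∈ (Finset.univ.erase k).erase (k + 1), n l :=
    (Finset.add_sum_erase _ _ (Finset.mem_erase.2 ⟨hk1, Finset.mem_univ _⟩)).symm
  have hsd : (Finset.univ : Finset (ZMod N)) \ {k} = Finset.univ.erase k := by
    ext l; simp
  have hsd2 : (Finset.univ : Finset (ZMod N)) \ {k, k + 1}
      = (Finset.univ.erase k).erase (k + 1) := by
    ext l; simp; tauto
  have hP : (∏ l ∈ Finset.univ \ {k}, levelPoly N n p l).natDegree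
      = ∑ l ∈ Finset.univ.erase k, n l := by
    rw [hsd, natDegree_prod_levelPoly]
  have hP2 : (∏ l ∈ Finset.univ \ {k, k + 1}, levelPoly N n p l).natDegree
      = ∑ l ∈ (Finset.univ.erase k).erase (k + 1), n l := by
    rw [hsd2, natDegree_prod_levelPoly]
  have hd1 : (derivative (levelPoly N n p k)).natDegree ≤ n k - 1 :=
    (natDegree_derivative_le _).trans (by rw [natDegree_levelPoly])
  have hd1' : (derivative (levelPoly N n p (k + 1))).natDegree ≤ n (k + 1) - 1 :=
    (natDegree_derivative_le _).trans (by rw [natDegree_levelPoly])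
  have hCX : ∀ c : ℂ, (C c * X).natDegree ≤ 1 := fun c => natDegree_mul_le.trans (by simp)
  refine (natDegree_add_le _ _).trans (max_le ((natDegree_sub_le _ _).trans (max_le ?_ ?_)) ?_)
  · -- second-derivative term
    by_cases h2 : 2 ≤ n k
    · have hdd : (derivative (derivative (levelPoly N n p k))).natDegree ≤ n k - 2 :=
        (natDegree_derivative_le _).trans (Nat.sub_le_sub_right hd1 1)
      refine natDegree_mul_le.trans ?_
      rw [hP]
      have : (C (((n k : ℂ) ^ 2)⁻¹) * X * derivative (derivative (levelPoly N n p k))).natDegree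
          ≤ 1 + (n k - 2) := natDegree_mul_le.trans (Nat.add_le_add (hCX _) hdd)
      omega
    · have hz : derivative (derivative (levelPoly N n p k)) = 0 := by
        have h0 : (derivative (levelPoly N n p k)).natDegree ≤ 0 := by omega
        rw [eq_C_of_natDegree_le_zero h0]
        exact derivative_C
      rw [hz, mul_zero, zero_mul, natDegree_zero]
      exact Nat.zero_le _
  · -- cross term
    refine natDegree_mul_le.trans ?_
    rw [hP2]
    have hb : (C (((n k : ℂ) * (n (k + 1) : ℂ))⁻¹) * X * derivative (levelPoly N n p k) *
        derivative (levelPoly N n p (k + 1))).natDegree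
        ≤ (1 + (n k - 1)) + (n (k + 1) - 1) :=
      natDegree_mul_le.trans
        (Nat.add_le_add (natDegree_mul_le.trans (Nat.add_le_add (hCX _) hd1)) hd1')
    have h1k := hn k
    have h1k1 := hn (k + 1)
    omega
  · -- first-derivative term
    refine natDegree_mul_le.trans ?_
    rw [hP]
    have hb : (C (((n k : ℂ) ^ 2)⁻¹) * derivative (levelPoly N n p k)).natDegree
        ≤ 0 + (n k - 1) := natDegree_mul_le.trans (Nat.add_le_add (by simp) hd1)
    have h1k := hn k
    omega

/-- The configuration is balanced (all forces vanish) iff `Q ≡ 0`. -/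
theorem stmt_5 (N : ℕ) [NeZero N] (hN : Even N) (hN2 : 2 ≤ N)
    (n : ZMod N → ℕ) (hn : ∀ k, 0 < n k)
    (p : (k : ZMod N) → Fin (n k) → ℂ)
    (hdist : Function.Injective (fun x : Σ k : ZMod N, Fin (n k) => p x.1 x.2))
    (hne : ∀ k i, p k i ≠ 0) :
    (∀ k i, Force N n p k i = 0) ↔ Qpoly N n p = 0 := by
  constructor
  · intro hF
    have heval : ∀ s : Σ k : ZMod N, Fin (n k),
        (Qpoly N n p).eval ((fun x : Σ k : ZMod N, Fin (n k) => p x.1 x.2) s) = 0 := by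
      rintro ⟨k, i⟩
      rw [eval_Qpoly N hN2 n hn p hdist k i, hF k i, mul_zero]
    refine Polynomial.eq_zero_of_natDegree_lt_card_of_eval_eq_zero _ hdist heval ?_
    have hm : 0 < ∑ k, n k :=
      Finset.sum_pos (fun k _ => hn k) Finset.univ_nonempty
    have hcard : Fintype.card (Σ k : ZMod N, Fin (n k)) = ∑ k, n k := by
      simp [Fintype.card_sigma]
    rw [hcard]
    exact lt_of_le_of_lt (natDegree_Qpoly_le N hN2 n hn p) (by omega)
  · intro hQ k i
    have h := eval_Qpoly N hN2 n hn p hdist k i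
    rw [hQ, eval_zero] at h
    have hd : ∀ (l : ZMod N) (j : Fin (n l)), (⟨l, j⟩ : Σ k, Fin (n k)) ≠ ⟨k, i⟩ →
        p k i - p l j ≠ 0 := by
      intro l j hne'
      exact sub_ne_zero.2 fun he => hne' (hdist he.symm)
    have hiD : (∏ j ∈ Finset.univ.erase i, (p k i - p k j)) ≠ 0 :=
      Finset.prod_ne_zero_iff.2 fun j hj =>
        hd k j (by simpa using (Finset.mem_erase.1 hj).1)
    have hiR : (∏ l ∈ Finset.univ.erase k, ∏ j, (p k i - p l j)) ≠ 0 :=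
      Finset.prod_ne_zero_iff.2 fun l hl => Finset.prod_ne_zero_iff.2 fun j _ =>
        hd l j fun hc => (Finset.mem_erase.1 hl).1 (congrArg Sigma.fst hc)
    have h' : (∏ j ∈ Finset.univ.erase i, (p k i - p k j)) *
        (∏ l ∈ Finset.univ.erase k, ∏ j, (p k i - p l j)) * Force N n p k i = 0 := h.symm
    rcases mul_eq_zero.1 h' with h'' | h''
    · exact absurd h'' (mul_ne_zero hiD hiR)
    · exact h''
end

section
/- The polynomial $Q(z)$ associated to a configuration has degree strictly less than $m=\sum_{k=1}^N n_k$. -/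
open Finset Polynomial

private lemma deg2 {a b : Polynomial ℂ} {A B : ℕ} (ha : a.degree ≤ (A : WithBot ℕ))
    (hb : b.degree ≤ (B : WithBot ℕ)) : (a * b).degree ≤ ((A + B : ℕ) : WithBot ℕ) :=
  (degree_mul_le a b).trans (by push_cast; exact add_le_add ha hb)

private lemma castle {A B : ℕ} (h : A ≤ B) : ((A : WithBot ℕ)) ≤ (B : WithBot ℕ) := by
  exact_mod_cast h

private lemma levelPoly_natDegree (N : ℕ) (n : ZMod N → ℕ) (p : (k : ZMod N) → Fin (n k) → ℂ)
    (k : ZMod N) : (levelPoly N n p k).natDegree = n k := by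
  simp [levelPoly, natDegree_prod_of_monic, fun i => monic_X_sub_C (p k i)]

private lemma prod_levelPoly_degree (N : ℕ) (n : ZMod N → ℕ)
    (p : (k : ZMod N) → Fin (n k) → ℂ) (s : Finset (ZMod N)) :
    (∏ l ∈ s, levelPoly N n p l).degree = ((∑ l ∈ s, n l : ℕ) : WithBot ℕ) := by
  rw [degree_prod]
  push_cast
  apply Finset.sum_congr rfl
  intro l _
  rw [levelPoly, degree_prod]
  simp

private lemma deriv_degree_le (N : ℕ) (n : ZMod N → ℕ) (p : (k : ZMod N) → Fin (n k) → ℂ)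
    (k : ZMod N) : (derivative (levelPoly N n p k)).degree ≤ ((n k - 1 : ℕ) : WithBot ℕ) :=
  (degree_le_natDegree).trans (castle (by
    simpa [levelPoly_natDegree] using natDegree_derivative_le (levelPoly N n p k)))

/-- The polynomial `Q` has degree strictly less than `m = ∑ k, n k`. -/
theorem stmt_6 (N : ℕ) [NeZero N] (hN : Even N) (hN2 : 2 ≤ N)
    (n : ZMod N → ℕ) (hn : ∀ k, 0 < n k)
    (p : (k : ZMod N) → Fin (n k) → ℂ)
    (hdist : Function.Injective (fun x : Σ k : ZMod N, Fin (n k) => p x.1 x.2))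
    (hne : ∀ k i, p k i ≠ 0) :
    (Qpoly N n p).degree < ((∑ k : ZMod N, n k : ℕ) : WithBot ℕ) := by
  set m := ∑ k : ZMod N, n k with hm
  haveI : Fact (1 < N) := ⟨hN2⟩
  have huniv : (Finset.univ : Finset (ZMod N)).Nonempty := Finset.univ_nonempty
  have hm1 : 1 ≤ m := by
    obtain ⟨k, hk⟩ := huniv
    calc 1 ≤ n k := hn k
    _ ≤ m := Finset.single_le_sum (fun i _ => Nat.zero_le _) (Finset.mem_univ k)
  have key : (Qpoly N n p).degree ≤ ((m - 1 : ℕ) : WithBot ℕ) := by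
    refine (degree_sum_le _ _).trans (Finset.sup_le ?_)
    intro k _
    have hkk : k ≠ k + 1 := by
      intro h
      exact one_ne_zero (left_eq_add.mp h)
    -- sums
    have hSk : n k + ∑ l ∈ Finset.univ \ {k}, n l = m := by
      rw [hm, ← Finset.sum_sdiff (Finset.subset_univ {k})]
      simp [add_comm]
    have hTk : n k + n (k + 1) + ∑ l ∈ Finset.univ \ {k, k + 1}, n l = m := by
      rw [hm, ← Finset.sum_sdiff (Finset.subset_univ {k, k + 1}),
        Finset.sum_pair hkk]
      ring
    have hC : ∀ c : ℂ, (C c).degree ≤ ((0 : ℕ) : WithBot ℕ) := fun c => by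
      simpa using degree_C_le
    have hX : (X : Polynomial ℂ).degree ≤ ((1 : ℕ) : WithBot ℕ) := by
      simpa using degree_X_le (R := ℂ)
    have hR : (∏ l ∈ Finset.univ \ {k}, levelPoly N n p l).degree
        ≤ ((∑ l ∈ Finset.univ \ {k}, n l : ℕ) : WithBot ℕ) :=
      (prod_levelPoly_degree N n p _).le
    have hR2 : (∏ l ∈ Finset.univ \ {k, k + 1}, levelPoly N n p l).degree
        ≤ ((∑ l ∈ Finset.univ \ {k, k + 1}, n l : ℕ) : WithBot ℕ) :=
      (prod_levelPoly_degree N n p _).le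
    have h1 : (C (((n k : ℂ) ^ 2)⁻¹) * X * derivative (derivative (levelPoly N n p k)) *
        ∏ l ∈ Finset.univ \ {k}, levelPoly N n p l).degree ≤ ((m - 1 : ℕ) : WithBot ℕ) := by
      by_cases hk1 : n k = 1
      · have hd1 : (derivative (levelPoly N n p k)).natDegree = 0 := by
          have := natDegree_derivative_le (levelPoly N n p k)
          rw [levelPoly_natDegree] at this
          omega
        have : derivative (derivative (levelPoly N n p k)) = 0 := by
          rw [eq_C_of_natDegree_le_zero hd1.le, derivative_C]
        simp [this]
      · have hD2 : (derivative (derivative (levelPoly N n p k))).degree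
            ≤ ((n k - 2 : ℕ) : WithBot ℕ) :=
          (degree_le_natDegree).trans (castle (by
            have h1' := natDegree_derivative_le (derivative (levelPoly N n p k))
            have h2' := natDegree_derivative_le (levelPoly N n p k)
            rw [levelPoly_natDegree] at h2'
            omega))
        refine (deg2 (deg2 (deg2 (hC _) hX) hD2) hR).trans (castle ?_)
        have := hn k
        omega
    have h2 : (C (((n k : ℂ) * (n (k + 1) : ℂ))⁻¹) * X * derivative (levelPoly N n p k) *
        derivative (levelPoly N n p (k + 1)) *
        ∏ l ∈ Finset.univ \ {k, k + 1}, levelPoly N n p l).degree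
        ≤ ((m - 1 : ℕ) : WithBot ℕ) := by
      refine (deg2 (deg2 (deg2 (deg2 (hC _) hX) (deriv_degree_le N n p k))
        (deriv_degree_le N n p (k + 1))) hR2).trans (castle ?_)
      have := hn k
      have := hn (k + 1)
      omega
    have h3 : (C (((n k : ℂ) ^ 2)⁻¹) * derivative (levelPoly N n p k) *
        ∏ l ∈ Finset.univ \ {k}, levelPoly N n p l).degree ≤ ((m - 1 : ℕ) : WithBot ℕ) := by
      refine (deg2 (deg2 (hC _) (deriv_degree_le N n p k)) hR).trans (castle ?_)
      have := hn k
      omega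
    exact (degree_add_le _ _).trans (max_le ((degree_sub_le _ _).trans (max_le h1 h2)) h3)
  exact lt_of_le_of_lt key (by exact_mod_cast Nat.sub_lt hm1 one_pos)
end

section
/- For the $(2,4)$ configuration with $P_1(z)=z^2-\alpha z+1$ and $P_2(z)=z^4+a_3z^3+a_2z^2+a_1z+a_0$, the equation $Q\equiv 0$ (with $Q(z)=4(z^3-\alpha z^2+z)P_2''+4(-7z^2+3\alpha z+1)P_2'+16(4z-\alpha)P_2$) holds if and only if $a_3=4\alpha$, $a_2=\alpha^2-4$, $a_1=-4\alpha$, $a_0=-\tfrac12(\alpha^2-2)$, and $\alpha(\alpha^2-4)=0$. -/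
open Polynomial

/-- For the `(2,4)` configuration with `P₂(z) = z⁴+a₃z³+a₂z²+a₁z+a₀` and
`Q(z) = 4(z³-αz²+z)P₂'' + 4(-7z²+3αz+1)P₂' + 16(4z-α)P₂`, one has `Q ≡ 0` iff
`a₃ = 4α`, `a₂ = α²-4`, `a₁ = -4α`, `a₀ = -(α²-2)/2`, and `α(α²-4) = 0`. -/
theorem stmt_10 (α a₀ a₁ a₂ a₃ : ℂ) (P₂ Q : Polynomial ℂ)
    (hP₂ : P₂ = X ^ 4 + C a₃ * X ^ 3 + C a₂ * X ^ 2 + C a₁ * X + C a₀)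
    (hQ : Q = C 4 * (X ^ 3 - C α * X ^ 2 + X) * derivative (derivative P₂)
        + C 4 * (C (-7) * X ^ 2 + C (3 * α) * X + 1) * derivative P₂
        + C 16 * (C 4 * X - C α) * P₂) :
    Q = 0 ↔ a₃ = 4 * α ∧ a₂ = α ^ 2 - 4 ∧ a₁ = -4 * α ∧ a₀ = -(α ^ 2 - 2) / 2
        ∧ α * (α ^ 2 - 4) = 0 := by
  subst hP₂
  have hQ2 : Q = C (4*a₁-16*α*a₀) + C (16*a₂-4*α*a₁+64*a₀) * X
      + C (36*a₃+36*a₁) * X^2 + C (16*a₂-4*α*a₃+64) * X^3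
      + C (4*a₃-16*α) * X^4 := by
    rw [hQ]
    simp only [derivative_add, derivative_mul, derivative_X_pow, derivative_C,
      derivative_X, derivative_one, derivative_ofNat, zero_mul, mul_zero,
      add_zero, zero_add, mul_one]
    push_cast
    simp only [map_add, map_sub, map_mul, map_neg, map_ofNat, map_one, Polynomial.C_1]
    ring
  constructor
  · intro h
    rw [hQ2] at h
    rw [Polynomial.ext_iff] at h
    have h0 := h 0
    have h1 := h 1
    have h2 := h 2
    have h3 := h 3
    have h4 := h 4
    simp only [coeff_add, coeff_C_mul, coeff_X_pow, coeff_C, coeff_X, coeff_zero,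
      mul_one, mul_zero, add_zero, zero_add] at h0 h1 h2 h3 h4
    norm_num at h0 h1 h2 h3 h4
    have e3 : a₃ = 4 * α := by linear_combination h4 / 4
    have e1 : a₁ = -4 * α := by linear_combination h2 / 36 - e3
    have e2 : a₂ = α ^ 2 - 4 := by linear_combination h3 / 16 + α / 4 * e3
    have e0 : a₀ = -(α ^ 2 - 2) / 2 := by
      linear_combination h1 / 64 - e2 / 4 + α / 16 * e1
    exact ⟨e3, e2, e1, e0, by linear_combination h0 / 8 - e1 / 2 + 2 * α * e0⟩
  · rintro ⟨h3, h2, h1, h0, hα⟩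
    subst h3 h2 h1 h0
    rw [hQ2]
    have e0 : 4*(-4*α) - 16*α*(-(α^2-2)/2) = 0 := by linear_combination 8 * hα
    have e1 : 16*(α^2-4) - 4*α*(-4*α) + 64*(-(α^2-2)/2) = (0:ℂ) := by ring
    have e2 : 36*(4*α) + 36*(-4*α) = (0:ℂ) := by ring
    have e3 : 16*(α^2-4) - 4*α*(4*α) + 64 = (0:ℂ) := by ring
    have e4 : 4*(4*α) - 16*α = (0:ℂ) := by ring
    rw [e0, e1, e2, e3, e4]
    simp
end

section
/- For the $(2,6)$ case, setting $a_5=9\alpha$, $a_4=9(\alpha^2-1)$, $a_3=\alpha(\alpha^2-26)$, $a_2=-9(\alpha^2-1)$, $a_1=-\tfrac{9}{25}(2\alpha^3-27\alpha)$, $a_0=\tfrac1{25}(-2\alpha^4+52\alpha^2-25)$, the polynomial $Q(z)=4(z^3-\alpha z^2+z)P_2''(z)+4(-11z^2+5\alpha z+1)P_2'(z)+36(4z-\alpha)P_2(z)$ with $P_2(z)=z^6+\sum_{i=0}^5 a_iz^i$ is identically zero if and only if $\alpha(\alpha^2-26)(\alpha^2-1)=0$. -/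
open Polynomial

/-- For the `(2,6)` case with the stated coefficients (polynomials in `α`),
`Q ≡ 0` iff `α(α²-26)(α²-1) = 0`. -/
theorem stmt_14 (α : ℂ) (P₂ Q : Polynomial ℂ)
    (hP₂ : P₂ = X ^ 6 + C (9 * α) * X ^ 5 + C (9 * (α ^ 2 - 1)) * X ^ 4
        + C (α * (α ^ 2 - 26)) * X ^ 3 + C (-9 * (α ^ 2 - 1)) * X ^ 2
        + C (-(9 / 25) * (2 * α ^ 3 - 27 * α)) * X
        + C ((-2 * α ^ 4 + 52 * α ^ 2 - 25) / 25))
    (hQ : Q = C 4 * (X ^ 3 - C α * X ^ 2 + X) * derivative (derivative P₂)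
        + C 4 * (C (-11) * X ^ 2 + C (5 * α) * X + 1) * derivative P₂
        + C 36 * (C 4 * X - C α) * P₂) :
    Q = 0 ↔ α * (α ^ 2 - 26) * (α ^ 2 - 1) = 0 := by
  have hQc : Q = C ((72 / 25) * (α * (α ^ 2 - 26) * (α ^ 2 - 1))) := by
    subst hP₂; subst hQ
    apply Polynomial.funext
    intro x
    simp [derivative_pow]
    ring
  rw [hQc]
  rw [show (0 : Polynomial ℂ) = C 0 from (map_zero C).symm, C_inj]
  constructor
  · intro h
    have h72 : (72 / 25 : ℂ) ≠ 0 := by norm_num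
    exact (mul_eq_zero.mp h).resolve_left h72
  · intro h; rw [h, mul_zero]
end
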